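/- The function g(μ, p) = 1 + (1−p)e^{−μ} + p e^{−μ/2} equals the fraction of non-error single-click plus no-click weight in the simulation model, and the worst-case X probability p̄_x(μ,p) = (1 − p − e^{−μ} + p e^{−μ/2})/(1 − e^{−μ}) satisfies: for fixed μ > 0, p̄_x is strictly decreasing in p ∈ [0,1], with p̄_x(μ,0) = 1 and p̄_x(μ,1) = (e^{−μ/2} − e^{−μ})/(1 − e^{−μ}) < 1/2. -/

import Mathlib

open Real

/-- the non-error single-click plus no-click weight in the simulation model -/
noncomputable def g (μ p : ℝ) : ℝ := 1 + (1 - p) * Real.exp (-μ) + p * Real.exp (-μ/2)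

/-- the worst-case (lower-bound) X-basis probability from the squashing-model
constraint, `p̄ₓ(μ,p) = (1 - p - e^{-μ} + p e^{-μ/2})/(1 - e^{-μ})` -/
noncomputable def pbarX (μ p : ℝ) : ℝ :=
  (1 - p - Real.exp (-μ) + p * Real.exp (-μ/2)) / (1 - Real.exp (-μ))

/-!
With `x = e^{-μ/2}` we have `e^{-μ} = x²`, so the numerator of `p̄ₓ` is
`(1 - x)(1 + x) - p(1 - x)` and, for `μ ≠ 0`, `p̄ₓ(μ, p) = 1 - p / (1 + x)`: an affine,
strictly decreasing function of `p`, equal to `1` at `p = 0` and to `x / (1 + x) < 1/2` at `p = 1`.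
-/

lemma exp_neg_eq_exp_neg_half_sq (μ : ℝ) : exp (-μ) = exp (-μ / 2) ^ 2 := by
  rw [← exp_nat_mul]
  ring_nf

lemma pbarX_eq_one_sub_div {μ : ℝ} (hμ : μ ≠ 0) (p : ℝ) :
    pbarX μ p = 1 - p / (1 + exp (-μ / 2)) := by
  have hx_ne_one : exp (-μ / 2) ≠ 1 := by
    rw [Ne, exp_eq_one_iff]
    exact div_ne_zero (neg_ne_zero.mpr hμ) two_ne_zero
  have hx_pos := exp_pos (-μ / 2)
  rw [pbarX, exp_neg_eq_exp_neg_half_sq]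
  set x := exp (-μ / 2)
  have h1 : 1 - x ≠ 0 := sub_ne_zero.mpr hx_ne_one.symm
  have h2 : 1 + x ≠ 0 := by positivity
  rw [show 1 - x ^ 2 = (1 - x) * (1 + x) by ring]
  field_simp
  ring

lemma pbarX_strictAnti {μ : ℝ} (hμ : μ ≠ 0) : StrictAnti (pbarX μ) := by
  intro p q hpq
  rw [pbarX_eq_one_sub_div hμ, pbarX_eq_one_sub_div hμ]
  have := exp_pos (-μ / 2)
  gcongr

lemma pbarX_one (μ : ℝ) :
    pbarX μ 1 = (exp (-μ / 2) - exp (-μ)) / (1 - exp (-μ)) := by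
  rw [pbarX]
  ring_nf

lemma pbarX_one_lt_half {μ : ℝ} (hμ : 0 < μ) : pbarX μ 1 < 1 / 2 := by
  have hx_lt_one : exp (-μ / 2) < 1 := exp_lt_one_iff.mpr (by linarith)
  have hx_pos := exp_pos (-μ / 2)
  rw [pbarX_eq_one_sub_div hμ.ne', sub_lt_comm, lt_div_iff₀ (by positivity)]
  linarith

/-- for fixed `μ > 0`, `p̄ₓ(μ,·)` is strictly decreasing on
`[0,1]`, with `p̄ₓ(μ,0) = 1` and `p̄ₓ(μ,1) = (e^{-μ/2}-e^{-μ})/(1-e^{-μ}) < 1/2`. -/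
theorem stmt16 (μ : ℝ) (hμ : 0 < μ) :
    StrictAntiOn (fun p => pbarX μ p) (Set.Icc 0 1) ∧
    pbarX μ 0 = 1 ∧
    pbarX μ 1 = (Real.exp (-μ/2) - Real.exp (-μ)) / (1 - Real.exp (-μ)) ∧
    (Real.exp (-μ/2) - Real.exp (-μ)) / (1 - Real.exp (-μ)) < 1/2 := by
  refine ⟨(pbarX_strictAnti hμ.ne').strictAntiOn _, ?_, pbarX_one μ, ?_⟩
  · simp [pbarX_eq_one_sub_div hμ.ne']
  · rw [← pbarX_one]
    exact pbarX_one_lt_half hμ
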